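/- arXiv:2506.23966 — 2 statements merged into one kernel-verified Lean document; each statement's English description precedes it below -/
import Mathlib

section
/- Let α > 0, C > 0, x̄ > 0 and x_max ≥ x̄, and define f(x) = ((x − x̄)² + C)·e^{2αx}. If C < 1/(4α²) − (2αx̄ − 1)²/(4α²), then 4α²C < 1, the point x₂ = x̄ + (−1 + √(1 − 4α²C))/(2α) satisfies 0 ≤ x₂ < x̄, and f attains its minimum over [0, x_max] at x₂; that is, f(x₂) ≤ f(x) for every x ∈ [0, x_max]. -/
/-!
With `t = x - x̄`, the derivative of `f` is `2 (α t² + t + α C) e^{2αx}`, and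
`4α (α t² + t + α C) = (2αt + 1)² - s²` with `s = √(1 - 4α²C)`. So `f` decreases while
`|2αt + 1| ≤ s` and increases once `2αt + 1 ≥ s`; the latter threshold is `x₂`. The condition on `C`
says `|2αx̄ - 1| < s`, which puts the left threshold below `0`, so on `[0, ∞)` the function `f`
decreases up to `x₂` and increases after it.
-/

open Real Set

lemma le_of_deriv_nonpos_of_deriv_nonneg {g : ℝ → ℝ} {a m x : ℝ} (hg : Differentiable ℝ g)
    (hleft : ∀ y ∈ Ioo a m, deriv g y ≤ 0) (hright : ∀ y ∈ Ioi m, 0 ≤ deriv g y) (hx : a ≤ x) :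
    g m ≤ g x := by
  rcases le_or_gt x m with hxm | hmx
  · have hanti : AntitoneOn g (Icc a m) :=
      antitoneOn_of_deriv_nonpos (convex_Icc a m) hg.continuous.continuousOn
        hg.differentiableOn (by rwa [interior_Icc])
    exact hanti ⟨hx, hxm⟩ ⟨hx.trans hxm, le_rfl⟩ hxm
  · have hmono : MonotoneOn g (Ici m) :=
      monotoneOn_of_deriv_nonneg (convex_Ici m) hg.continuous.continuousOn
        hg.differentiableOn (by rwa [interior_Ici])
    exact hmono self_mem_Ici hmx.le hmx.le

lemma hasDerivAt_sq_add_mul_exp (a C α x : ℝ) :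
    HasDerivAt (fun x => ((x - a) ^ 2 + C) * exp (2 * α * x))
      (2 * ((x - a) + α * ((x - a) ^ 2 + C)) * exp (2 * α * x)) x := by
  have hpoly : HasDerivAt (fun x => (x - a) ^ 2 + C) (2 * (x - a)) x := by
    simpa using (((hasDerivAt_id x).sub_const a).pow 2).add_const C
  have hexp : HasDerivAt (fun x => exp (2 * α * x)) (exp (2 * α * x) * (2 * α)) x := by
    simpa using ((hasDerivAt_id x).const_mul (2 * α)).exp
  exact (hpoly.mul hexp).congr_deriv (by ring)

section Quadratic

variable {α C s t : ℝ}

lemma add_mul_sq_add_nonpos (hα : 0 < α) (hs : s ^ 2 = 1 - 4 * α ^ 2 * C)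
    (hlo : -s ≤ 2 * α * t + 1) (hhi : 2 * α * t + 1 ≤ s) : t + α * (t ^ 2 + C) ≤ 0 := by
  have hsq : (2 * α * t + 1) ^ 2 ≤ s ^ 2 := by nlinarith
  have h : 4 * α * (t + α * (t ^ 2 + C)) ≤ 0 := by nlinarith
  nlinarith

lemma add_mul_sq_add_nonneg (hα : 0 < α) (hs : s ^ 2 = 1 - 4 * α ^ 2 * C) (hs0 : 0 ≤ s)
    (hlo : s ≤ 2 * α * t + 1) : 0 ≤ t + α * (t ^ 2 + C) := by
  have hsq : s ^ 2 ≤ (2 * α * t + 1) ^ 2 := by nlinarith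
  have h : 0 ≤ 4 * α * (t + α * (t ^ 2 + C)) := by nlinarith
  nlinarith

end Quadratic

theorem sq_add_mul_exp_le {a C α s x : ℝ} (hα : 0 < α) (hs : s ^ 2 = 1 - 4 * α ^ 2 * C)
    (hs0 : 0 ≤ s) (ha : 2 * α * a - 1 < s) (hx : 0 ≤ x) :
    ((a + (-1 + s) / (2 * α) - a) ^ 2 + C) * exp (2 * α * (a + (-1 + s) / (2 * α))) ≤
      ((x - a) ^ 2 + C) * exp (2 * α * x) := by
  set m := a + (-1 + s) / (2 * α) with hm
  have hm' : 2 * α * (m - a) + 1 = s := by rw [hm]; field_simp; ring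
  have hderiv := hasDerivAt_sq_add_mul_exp a C α
  refine le_of_deriv_nonpos_of_deriv_nonneg (fun y => (hderiv y).differentiableAt) ?_ ?_ hx
  · rintro y ⟨hy0, hym⟩
    rw [(hderiv y).deriv]
    refine mul_nonpos_of_nonpos_of_nonneg
      (mul_nonpos_of_nonneg_of_nonpos two_pos.le (add_mul_sq_add_nonpos hα hs ?_ ?_)) (exp_nonneg _)
    · nlinarith
    · nlinarith
  · intro y hy
    rw [(hderiv y).deriv]
    exact mul_nonneg (mul_nonneg two_pos.le
      (add_mul_sq_add_nonneg hα hs hs0 (by nlinarith [mem_Ioi.mp hy]))) (exp_nonneg _)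

theorem stmt_1_general (α C xbar xmax : ℝ) (hα : 0 < α) (hC : 0 < C)
    (f : ℝ → ℝ) (hf : ∀ x, f x = ((x - xbar) ^ 2 + C) * Real.exp (2 * α * x))
    (hcond : C < 1 / (4 * α ^ 2) - (2 * α * xbar - 1) ^ 2 / (4 * α ^ 2)) :
    4 * α ^ 2 * C < 1 ∧
    0 ≤ xbar + (-1 + Real.sqrt (1 - 4 * α ^ 2 * C)) / (2 * α) ∧
    xbar + (-1 + Real.sqrt (1 - 4 * α ^ 2 * C)) / (2 * α) < xbar ∧
    ∀ x ∈ Set.Icc (0 : ℝ) xmax,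
      f (xbar + (-1 + Real.sqrt (1 - 4 * α ^ 2 * C)) / (2 * α)) ≤ f x := by
  rw [← sub_div, lt_div_iff₀ (by positivity)] at hcond
  have hlt : 4 * α ^ 2 * C < 1 := by nlinarith [sq_nonneg (2 * α * xbar - 1)]
  set s := √(1 - 4 * α ^ 2 * C)
  have hs0 : 0 ≤ s := sqrt_nonneg _
  have hs : s ^ 2 = 1 - 4 * α ^ 2 * C := sq_sqrt (by linarith)
  have hs1 : s < 1 := (sqrt_lt' one_pos).mpr (by nlinarith [mul_pos (pow_pos hα 2) hC])
  obtain ⟨hlo, hhi⟩ :=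
    abs_lt_of_sq_lt_sq' (hs ▸ (by linarith) : (2 * α * xbar - 1) ^ 2 < s ^ 2) hs0
  refine ⟨hlt, ?_, ?_, fun x hx => ?_⟩
  · have hx₂ : xbar + (-1 + s) / (2 * α) = (2 * α * xbar - 1 + s) / (2 * α) := by
      field_simp; ring
    rw [hx₂]
    exact div_nonneg (by linarith) (by positivity)
  · linarith [div_neg_of_neg_of_pos (by linarith : -1 + s < 0) (by positivity : 0 < 2 * α)]
  · rw [hf, hf]
    exact sq_add_mul_exp_le hα hs hs0 hhi hx.1

theorem stmt_1 (α C xbar xmax : ℝ) (hα : 0 < α) (hC : 0 < C) (hxbar : 0 < xbar)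
    (hxmax : xbar ≤ xmax)
    (f : ℝ → ℝ) (hf : ∀ x, f x = ((x - xbar) ^ 2 + C) * Real.exp (2 * α * x))
    (hcond : C < 1 / (4 * α ^ 2) - (2 * α * xbar - 1) ^ 2 / (4 * α ^ 2)) :
    4 * α ^ 2 * C < 1 ∧
    0 ≤ xbar + (-1 + Real.sqrt (1 - 4 * α ^ 2 * C)) / (2 * α) ∧
    xbar + (-1 + Real.sqrt (1 - 4 * α ^ 2 * C)) / (2 * α) < xbar ∧
    ∀ x ∈ Set.Icc (0 : ℝ) xmax,
      f (xbar + (-1 + Real.sqrt (1 - 4 * α ^ 2 * C)) / (2 * α)) ≤ f x :=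
  stmt_1_general α C xbar xmax hα hC f hf hcond
end

section
/- Let α ≥ 0, C ≥ 0 and x̄ be real, and define f(x) = ((x − x̄)² + C)·e^{2αx}. Then f(x̄ − αC) ≤ f(x̄) = C·e^{2αx̄}; equivalently, (1 + α²C)·e^{−2α²C} ≤ 1, so placing the pinching antenna at x̄ − αC yields a received SNR at least as large as placing it at x̄. -/
open Real

lemma one_add_mul_exp_neg_two_mul_le_one {t : ℝ} (ht : 0 ≤ t) :
    (1 + t) * exp (-(2 * t)) ≤ 1 :=
  calc (1 + t) * exp (-(2 * t)) ≤ exp t * exp (-(2 * t)) := by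
        gcongr
        linarith [add_one_le_exp t]
    _ = exp (-t) := by rw [← exp_add]; ring_nf
    _ ≤ 1 := exp_le_one_iff.mpr (by linarith)

theorem stmt_15_general (α C xbar : ℝ) (hC : 0 ≤ C)
    (f : ℝ → ℝ) (hf : ∀ x, f x = ((x - xbar) ^ 2 + C) * Real.exp (2 * α * x)) :
    f (xbar - α * C) ≤ f xbar ∧
    f xbar = C * Real.exp (2 * α * xbar) ∧
    (1 + α ^ 2 * C) * Real.exp (-(2 * α ^ 2 * C)) ≤ 1 := by
  have hratio : (1 + α ^ 2 * C) * exp (-(2 * α ^ 2 * C)) ≤ 1 := by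
    simpa only [mul_assoc] using one_add_mul_exp_neg_two_mul_le_one (by positivity : 0 ≤ α ^ 2 * C)
  have hcentre : f xbar = C * exp (2 * α * xbar) := by rw [hf]; ring
  have hshift : f (xbar - α * C) = f xbar * ((1 + α ^ 2 * C) * exp (-(2 * α ^ 2 * C))) := by
    have hexp : exp (2 * α * (xbar - α * C)) = exp (2 * α * xbar) * exp (-(2 * α ^ 2 * C)) := by
      rw [← exp_add]; ring_nf
    rw [hf, hcentre, hexp]; ring
  refine ⟨?_, hcentre, hratio⟩
  rw [hshift]
  exact mul_le_of_le_one_right (by rw [hcentre]; positivity) hratio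

theorem stmt_15 (α C xbar : ℝ) (hα : 0 ≤ α) (hC : 0 ≤ C)
    (f : ℝ → ℝ) (hf : ∀ x, f x = ((x - xbar) ^ 2 + C) * Real.exp (2 * α * x)) :
    f (xbar - α * C) ≤ f xbar ∧
    f xbar = C * Real.exp (2 * α * xbar) ∧
    (1 + α ^ 2 * C) * Real.exp (-(2 * α ^ 2 * C)) ≤ 1 :=
  stmt_15_general α C xbar hC f hf
end
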